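/- arXiv:1212.3731 — 2 statements merged into one kernel-verified Lean document; each statement's English description precedes it below -/
import Mathlib

section
/- Consider a commutative 3×3 diagram of chain complexes whose rows and columns are short exact sequences: rows 0→X→Y→Z→0, 0→X'→Y'→Z'→0, 0→X''→Y''→Z''→0, and columns 0→X→X'→X''→0 etc. Then in the induced grid of long exact homology sequences, all squares commute except that the square formed by the connecting homomorphisms ∂'' : H_n(Z'') → H_{n−1}(X'') (of the bottom row), ∂_X : H_{n−1}(X'') → H_{n−2}(X) (of the left column), ∂_Z : H_n(Z'') → H_{n−1}(Z) (of the right column), and ∂ : H_{n−1}(Z) → H_{n−2}(X) (of the top row) anticommutes: ∂_X ∘ ∂'' + ∂ ∘ ∂_Z = 0. -/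
/-!
Lift a cycle `z''` of `Z''` through the surjection `Y' → Y'' → Z''` to `y'`. Then
`d (g' y') = u'' (f' x')` for some `x'`, and `d y' - u' x' = g y` for some `y`. Both composites
are computed from this one zig-zag: `∂_X ∂'' [z'']` is the class of the `x` with `f x = d x'`,
while `∂_Z [z'']` is represented by `v y`, and
`g (d y) = d (d y' - u' x') = -u' (d x') = g (-u x)`, so `∂ ∂_Z [z'']` is the class of `-x`.
-/

open CategoryTheory

namespace HomologicalComplex

variable {R : Type*} [Ring R] {ι : Type*} {c : ComplexShape ι}
  {A B C : HomologicalComplex (ModuleCat R) c}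

lemma Hom.comm_apply (φ : A ⟶ B) (i j : ι) (x : A.X i) :
    B.d i j (φ.f i x) = φ.f j (A.d i j x) :=
  ConcreteCategory.congr_hom (φ.comm i j) x

lemma comp_f_apply (φ : A ⟶ B) (ψ : B ⟶ C) (i : ι) (x : A.X i) :
    (φ ≫ ψ).f i x = ψ.f i (φ.f i x) :=
  rfl

lemma d_d_apply (i j k : ι) (x : A.X i) : A.d j k (A.d i j x) = 0 :=
  ConcreteCategory.congr_hom (A.d_comp_d i j k) x

lemma iCycles_cyclesMk {i : ι} (x : A.X i) (j : ι) (hj : c.next i = j) (hx : A.d i j x = 0) :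
    A.iCycles i (A.cyclesMk x j hj hx) = x :=
  A.i_cyclesMk x j hj hx

lemma cyclesMk_neg {i : ι} (x : A.X i) (j : ι) (hj : c.next i = j) (hx : A.d i j x = 0)
    (hx' : A.d i j (-x) = 0) : A.cyclesMk (-x) j hj hx' = -A.cyclesMk x j hj hx :=
  (ModuleCat.mono_iff_injective (A.iCycles i)).1 inferInstance <| by
    rw [map_neg, iCycles_cyclesMk, iCycles_cyclesMk]

lemma homology_hom_ext_cyclesMk {M : ModuleCat R} {i j : ι} (hj : c.next i = j)
    {φ ψ : A.homology i ⟶ M}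
    (h : ∀ (x : A.X i) (hx : A.d i j x = 0),
      φ (A.homologyπ i (A.cyclesMk x j hj hx)) = ψ (A.homologyπ i (A.cyclesMk x j hj hx))) :
    φ = ψ := by
  rw [← cancel_epi (A.homologyπ i)]
  ext z
  have hz : A.d i j (A.iCycles i z) = 0 := ConcreteCategory.congr_hom (A.iCycles_d i j) z
  have : A.cyclesMk (A.iCycles i z) j hj hz = z :=
    (ModuleCat.mono_iff_injective (A.iCycles i)).1 inferInstance (iCycles_cyclesMk _ _ _ _)
  rw [← this]
  exact h _ hz

end HomologicalComplex

namespace CategoryTheory.ShortComplex.ShortExact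

variable {R : Type*} [Ring R] {ι : Type*} {c : ComplexShape ι}

section

variable {S : ShortComplex (HomologicalComplex (ModuleCat R) c)}

lemma injective_f_f (hS : S.ShortExact) (i : ι) : Function.Injective (S.f.f i) :=
  ((HomologicalComplex.shortExact_iff_degreewise_shortExact S).1 hS i).moduleCat_injective_f

lemma surjective_g_f (hS : S.ShortExact) (i : ι) : Function.Surjective (S.g.f i) :=
  ((HomologicalComplex.shortExact_iff_degreewise_shortExact S).1 hS i).moduleCat_surjective_g

lemma exists_f_f_eq (hS : S.ShortExact) {i : ι} (x : S.X₂.X i) (hx : S.g.f i x = 0) :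
    ∃ y, S.f.f i y = x :=
  (ShortComplex.moduleCat_exact_iff _).1
    ((HomologicalComplex.shortExact_iff_degreewise_shortExact S).1 hS i).exact x hx

lemma moduleCat_δ_apply (hS : S.ShortExact) {i j : ι} (hij : c.Rel i j) (x₃ : S.X₃.X i)
    (hx₃ : S.X₃.d i j x₃ = 0) (x₂ : S.X₂.X i) (hx₂ : S.g.f i x₂ = x₃)
    (x₁ : S.X₁.X j) (hx₁ : S.f.f j x₁ = S.X₂.d i j x₂) {k : ι} (hk : c.next j = k)
    (hx₁' : S.X₁.d j k x₁ = 0) :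
    hS.δ i j hij (S.X₃.homologyπ i (S.X₃.cyclesMk x₃ j (c.next_eq' hij) hx₃)) =
      S.X₁.homologyπ j (S.X₁.cyclesMk x₁ k hk hx₁') :=
  hS.δ_apply i j hij x₃ hx₃ x₂ hx₂ x₁ hx₁ k hk

end

variable {A₁ A₂ A₃ B₁ B₂ : HomologicalComplex (ModuleCat R) c}
  {a : A₁ ⟶ A₂} {a' : A₂ ⟶ A₃} {b : B₁ ⟶ B₂} {b' : B₂ ⟶ A₁}
  {ha : a ≫ a' = 0} {hb : b ≫ b' = 0}

lemma δ_comp_δ_apply (hA : (ShortComplex.mk a a' ha).ShortExact)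
    (hB : (ShortComplex.mk b b' hb).ShortExact)
    {i j k l : ι} (hij : c.Rel i j) (hjk : c.Rel j k) (hkl : c.next k = l)
    (x₃ : A₃.X i) (hx₃ : A₃.d i j x₃ = 0) (x₂ : A₂.X i) (hx₂ : a'.f i x₂ = x₃)
    (y₂ : B₂.X j) (hy₂ : a.f j (b'.f j y₂) = A₂.d i j x₂)
    (y₁ : B₁.X k) (hy₁ : b.f k y₁ = B₂.d j k y₂) (hy₁' : B₁.d k l y₁ = 0) :
    (hA.δ i j hij ≫ hB.δ j k hjk)
        (A₃.homologyπ i (A₃.cyclesMk x₃ j (c.next_eq' hij) hx₃)) =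
      B₁.homologyπ k (B₁.cyclesMk y₁ l hkl hy₁') := by
  rw [ModuleCat.comp_apply, moduleCat_δ_apply hA hij x₃ hx₃ x₂ hx₂ _ hy₂ (c.next_eq' hjk)
    (hA.d_eq_zero_of_f_eq_d_apply i j x₂ _ hy₂ k)]
  exact moduleCat_δ_apply hB hjk _ _ y₂ rfl y₁ hy₁ hkl hy₁'

end CategoryTheory.ShortComplex.ShortExact

namespace HomologicalComplex

open CategoryTheory.ShortComplex.ShortExact

variable {R : Type*} [Ring R] {ι : Type*} {c : ComplexShape ι}
  {X X' X'' Y Y' Y'' Z Z' Z'' : HomologicalComplex (ModuleCat R) c}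
  {u : X ⟶ Y} {v : Y ⟶ Z} {u' : X' ⟶ Y'} {v' : Y' ⟶ Z'}
  {u'' : X'' ⟶ Y''} {v'' : Y'' ⟶ Z''}
  {f : X ⟶ X'} {f' : X' ⟶ X''} {g : Y ⟶ Y'} {g' : Y' ⟶ Y''} {h : Z ⟶ Z'} {h' : Z' ⟶ Z''}
  {huv : u ≫ v = 0} {huv'' : u'' ≫ v'' = 0}
  {hff' : f ≫ f' = 0} {hgg' : g ≫ g' = 0} {hhh' : h ≫ h' = 0}

theorem δ_comp_δ_add_δ_comp_δ_eq_zero (huv' : u' ≫ v' = 0)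
    (comm₁ : u ≫ g = f ≫ u') (comm₂ : v ≫ h = g ≫ v')
    (comm₃ : u' ≫ g' = f' ≫ u'') (comm₄ : v' ≫ h' = g' ≫ v'')
    (hrow₁ : (ShortComplex.mk u v huv).ShortExact)
    (hrow₃ : (ShortComplex.mk u'' v'' huv'').ShortExact)
    (hcolX : (ShortComplex.mk f f' hff').ShortExact)
    (hcolY : (ShortComplex.mk g g' hgg').ShortExact)
    (hcolZ : (ShortComplex.mk h h' hhh').ShortExact)
    {i j k : ι} (hij : c.Rel i j) (hjk : c.Rel j k) :
    hrow₃.δ i j hij ≫ hcolX.δ j k hjk + hcolZ.δ i j hij ≫ hrow₁.δ j k hjk = 0 := by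
  refine homology_hom_ext_cyclesMk (c.next_eq' hij) fun z'' hz'' => ?_
  obtain ⟨y', rfl⟩ : ∃ y', v''.f i (g'.f i y') = z'' :=
    ((surjective_g_f hrow₃ i).comp (surjective_g_f hcolY i)) z''
  obtain ⟨x'', hx''⟩ : ∃ x'', u''.f j x'' = Y''.d i j (g'.f i y') :=
    exists_f_f_eq hrow₃ _ (by rw [← Hom.comm_apply, hz''])
  obtain ⟨x', rfl⟩ : ∃ x', f'.f j x' = x'' := surjective_g_f hcolX j x''
  have hdx'' : X''.d j k (f'.f j x') = 0 := hrow₃.d_eq_zero_of_f_eq_d_apply i j _ _ hx'' k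
  have hg'_dy'_sub : g'.f j (Y'.d i j y' - u'.f j x') = 0 := by
    rw [map_sub, ← comp_f_apply, comm₃, comp_f_apply, ← Hom.comm_apply, hx'', sub_self]
  obtain ⟨y, hy⟩ : ∃ y, g.f j y = Y'.d i j y' - u'.f j x' := exists_f_f_eq hcolY _ hg'_dy'_sub
  have hdx' : f'.f k (X'.d j k x') = 0 := by rw [← Hom.comm_apply, hdx'']
  obtain ⟨x, hx⟩ : ∃ x, f.f k x = X'.d j k x' := exists_f_f_eq hcolX _ hdx'
  have hvu'x' : v'.f j (u'.f j x') = 0 := by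
    rw [← comp_f_apply, huv']
    rfl
  have hvy : h.f j (v.f j y) = Z'.d i j (v'.f i y') := by
    rw [← comp_f_apply, comm₂, comp_f_apply, hy, map_sub, hvu'x', sub_zero, Hom.comm_apply]
  have hdy : u.f k (-x) = Y.d j k y := injective_f_f hcolY k <| by
    change g.f k (u.f k (-x)) = g.f k (Y.d j k y)
    rw [← comp_f_apply, comm₁, comp_f_apply, map_neg, hx, map_neg, ← Hom.comm_apply,
      ← Hom.comm_apply, hy, map_sub, d_d_apply, zero_sub]
  have hdx : X.d k (c.next k) x = 0 := hcolX.d_eq_zero_of_f_eq_d_apply j k x' x hx _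
  have hdnx : X.d k (c.next k) (-x) = 0 := by rw [map_neg, hdx, neg_zero]
  have hv'y' : h'.f i (v'.f i y') = v''.f i (g'.f i y') := by
    rw [← comp_f_apply, comm₄, comp_f_apply]
  simp only [ModuleCat.hom_add, LinearMap.add_apply]
  rw [δ_comp_δ_apply hrow₃ hcolX hij hjk rfl _ hz'' _ rfl x' hx'' x hx hdx,
    δ_comp_δ_apply hcolZ hrow₁ hij hjk rfl _ hz'' _ hv'y' y hvy (-x) hdy hdnx,
    cyclesMk_neg _ _ _ hdx, map_neg, add_neg_cancel]
  rfl

end HomologicalComplex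

/-- In a `3×3` commutative diagram of chain complexes of modules with short
exact rows `0→X→Y→Z→0`, `0→X'→Y'→Z'→0`, `0→X''→Y''→Z''→0` and short exact columns
`0→X→X'→X''→0`, `0→Y→Y'→Y''→0`, `0→Z→Z'→Z''→0`, the square of connecting homomorphisms
anticommutes: `∂_X ∘ ∂'' + ∂ ∘ ∂_Z = 0` as maps `H_n(Z'') → H_{n-2}(X)`.
(All other squares of the induced grid commute by functoriality of the long exact sequence.) -/
theorem three_by_three_connecting_anticommutes
    (R : Type) [CommRing R]
    (X X' X'' Y Y' Y'' Z Z' Z'' : HomologicalComplex (ModuleCat R) (ComplexShape.down ℤ))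
    (u : X ⟶ Y) (v : Y ⟶ Z) (u' : X' ⟶ Y') (v' : Y' ⟶ Z')
    (u'' : X'' ⟶ Y'') (v'' : Y'' ⟶ Z'')
    (f : X ⟶ X') (f' : X' ⟶ X'') (g : Y ⟶ Y') (g' : Y' ⟶ Y'')
    (h : Z ⟶ Z') (h' : Z' ⟶ Z'')
    (huv : u ≫ v = 0) (huv' : u' ≫ v' = 0) (huv'' : u'' ≫ v'' = 0)
    (hff' : f ≫ f' = 0) (hgg' : g ≫ g' = 0) (hhh' : h ≫ h' = 0)
    (comm₁ : u ≫ g = f ≫ u') (comm₂ : v ≫ h = g ≫ v')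
    (comm₃ : u' ≫ g' = f' ≫ u'') (comm₄ : v' ≫ h' = g' ≫ v'')
    (hrow₁ : (ShortComplex.mk u v huv).ShortExact)
    (hrow₃ : (ShortComplex.mk u'' v'' huv'').ShortExact)
    (hcolX : (ShortComplex.mk f f' hff').ShortExact)
    (hcolY : (ShortComplex.mk g g' hgg').ShortExact)
    (hcolZ : (ShortComplex.mk h h' hhh').ShortExact)
    (n : ℤ) :
    hrow₃.δ n (n - 1) (by simp only [ComplexShape.down_Rel]; omega) ≫ hcolX.δ (n - 1) (n - 2) (by simp only [ComplexShape.down_Rel]; omega)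
      + hcolZ.δ n (n - 1) (by simp only [ComplexShape.down_Rel]; omega) ≫ hrow₁.δ (n - 1) (n - 2) (by simp only [ComplexShape.down_Rel]; omega) = 0 :=
  HomologicalComplex.δ_comp_δ_add_δ_comp_δ_eq_zero huv' comm₁ comm₂ comm₃ comm₄
    hrow₁ hrow₃ hcolX hcolY hcolZ _ _
end

section
/- Let (C_·, φ) be an S¹-complex of modules over a commutative ring such that H_n(C̃, ∂̃) = 0 for all n. Then H_n(C, φ_0) = 0 for all n. -/
/-- Cast along an equality of degrees. -/
def gcast (R : Type) [CommRing R] (C : ℤ → Type) [∀ n, AddCommGroup (C n)]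
    [∀ n, Module R (C n)] {m n : ℤ} (h : m = n) : C m →ₗ[R] C n where
  toFun x := h ▸ x
  map_add' x y := by subst h; rfl
  map_smul' r x := by subst h; rfl

/-- An `S¹`-structure on a `ℤ`-graded module: maps `φ i` of degree `2*i - 1`
satisfying `∑_{i+j=k} φ i ∘ φ j = 0` for all `k`. -/
def IsSOneStructure (R : Type) [CommRing R] (C : ℤ → Type) [∀ n, AddCommGroup (C n)]
    [∀ n, Module R (C n)]
    (φ : ∀ (i : ℕ) (n : ℤ), C n →ₗ[R] C (n + (2 * (i : ℤ) - 1))) : Prop :=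
  ∀ (k : ℕ) (n : ℤ),
    ∑ i ∈ (Finset.range (k + 1)).attach,
      (gcast R C (show n + (2 * ((k - i.1 : ℕ) : ℤ) - 1) + (2 * (i.1 : ℤ) - 1)
            = n + 2 * (k : ℤ) - 2 by
          have := Finset.mem_range.mp i.2; omega)).comp
        ((φ i.1 (n + (2 * ((k - i.1 : ℕ) : ℤ) - 1))).comp (φ (k - i.1) n)) = 0

/-- The degree-`n` part of `R[u] ⊗ C` with `|u| = 2`. -/
abbrev Tilde (C : ℤ → Type) [∀ n, AddCommGroup (C n)] (n : ℤ) : Type :=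
  Π₀ ℓ : ℕ, C (n - 2 * (ℓ : ℤ))

/-- The equivariant differential `∂̃(u^ℓ ⊗ x) = ∑_{j ≤ ℓ} u^{ℓ-j} ⊗ φ j x`. -/
noncomputable def tildeD (R : Type) [CommRing R] (C : ℤ → Type) [∀ n, AddCommGroup (C n)]
    [∀ n, Module R (C n)]
    (φ : ∀ (i : ℕ) (n : ℤ), C n →ₗ[R] C (n + (2 * (i : ℤ) - 1))) (n : ℤ) :
    Tilde C n →ₗ[R] Tilde C (n - 1) :=
  DFinsupp.lsum ℕ fun ℓ =>
    ∑ j ∈ (Finset.range (ℓ + 1)).attach,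
      (DFinsupp.lsingle (ℓ - j.1)).comp
        ((gcast R C (show n - 2 * (ℓ : ℤ) + (2 * (j.1 : ℤ) - 1)
              = n - 1 - 2 * ((ℓ - j.1 : ℕ) : ℤ) by
            have := Finset.mem_range.mp j.2; omega)).comp (φ j.1 (n - 2 * (ℓ : ℤ))))


section Helpers

variable {R : Type} [CommRing R] {C : ℤ → Type} [∀ n, AddCommGroup (C n)]
  [∀ n, Module R (C n)]
  (φ : ∀ (i : ℕ) (n : ℤ), C n →ₗ[R] C (n + (2 * (i : ℤ) - 1)))

lemma gcast_id {n : ℤ} (h : n = n) (x : C n) : gcast R C h x = x := rfl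

lemma gcast_gcast {a b c : ℤ} (h1 : a = b) (h2 : b = c) (x : C a) :
    gcast R C h2 (gcast R C h1 x) = gcast R C (h1.trans h2) x := by
  subst h1; subst h2; rfl

lemma gcast_eq_symm {a b : ℤ} (h : a = b) (x : C a) (y : C b) :
    gcast R C h x = y ↔ x = gcast R C h.symm y := by
  subst h; exact Iff.rfl

lemma phi_gcast (i : ℕ) {a b : ℤ} (h : a = b)
    (h2 : a + (2 * (i : ℤ) - 1) = b + (2 * (i : ℤ) - 1)) (x : C a) :
    φ i b (gcast R C h x) = gcast R C h2 (φ i a x) := by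
  subst h; rfl

lemma phi_congr {i i' : ℕ} (h : i = i') {a c : ℤ}
    (hb : a + (2 * (i : ℤ) - 1) = c) (hb' : a + (2 * (i' : ℤ) - 1) = c) (x : C a) :
    gcast R C hb (φ i a x) = gcast R C hb' (φ i' a x) := by
  subst h; rfl

lemma single_congr {n : ℤ} {i i' : ℕ} (h : i = i') (b : C (n - 2 * (i : ℤ))) :
    (DFinsupp.single (β := fun ℓ : ℕ => C (n - 2 * (ℓ : ℤ))) i b)
      = DFinsupp.single i' (gcast R C (by rw [h]) b) := by
  subst h; rfl

lemma single_apply_self {n : ℤ} {i m : ℕ} (h : i = m) (b : C (n - 2 * (i : ℤ))) :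
    (DFinsupp.single (β := fun ℓ : ℕ => C (n - 2 * (ℓ : ℤ))) i b) m
      = gcast R C (by rw [h]) b := by
  subst h; exact DFinsupp.single_eq_same

lemma gT_apply {a b : ℤ} (h : a = b) (v : Tilde C a) (m : ℕ) :
    (gcast R (fun t => Tilde C t) h v) m = gcast R C (by rw [h]) (v m) := by
  subst h; rfl

lemma D_gT {a b : ℤ} (h : a = b) (h2 : a - 1 = b - 1) (v : Tilde C a) :
    tildeD R C φ b (gcast R (fun t => Tilde C t) h v)
      = gcast R (fun t => Tilde C t) h2 (tildeD R C φ a v) := by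
  subst h; rfl


/-- shift down (quotient by `u^0` part, divide by `u`). -/
noncomputable def sd (a k : ℤ) (h : a = k + 2) : Tilde C a →ₗ[R] Tilde C k :=
  DFinsupp.lsum ℕ fun ℓ =>
    Nat.rec (motive := fun ℓ => C (a - 2 * (ℓ : ℤ)) →ₗ[R] Tilde C k) 0
      (fun ℓ' _ => (DFinsupp.lsingle ℓ').comp (gcast R C (by push_cast; omega))) ℓ

/-- shift up (multiply by `u`). -/
noncomputable def su (a k : ℤ) (h : k = a + 2) : Tilde C a →ₗ[R] Tilde C k :=
  DFinsupp.lsum ℕ fun ℓ =>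
    (DFinsupp.lsingle (ℓ + 1)).comp (gcast R C (by push_cast; omega))

lemma sd_single (a k : ℤ) (h : a = k + 2) (i : ℕ) (b : C (a - 2 * (i : ℤ))) :
    sd (R := R) (C := C) a k h (DFinsupp.single i b)
      = if hi : i = 0 then 0
        else DFinsupp.single (i - 1) (gcast R C (by have := hi; omega) b) := by
  cases i with
  | zero => simp [sd]
  | succ i' => simp [sd]

lemma su_single (a k : ℤ) (h : k = a + 2) (i : ℕ) (b : C (a - 2 * (i : ℤ))) :
    su (R := R) (C := C) a k h (DFinsupp.single i b)
      = DFinsupp.single (i + 1) (gcast R C (by push_cast; omega) b) := by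
  simp [su]

lemma D_single (n : ℤ) (ℓ : ℕ) (w : C (n - 2 * (ℓ : ℤ))) :
    tildeD R C φ n (DFinsupp.single ℓ w)
      = ∑ j ∈ Finset.range (ℓ + 1),
          if h : j ≤ ℓ then
            DFinsupp.single (β := fun m : ℕ => C (n - 1 - 2 * (m : ℤ))) (ℓ - j)
              (gcast R C (by omega) (φ j (n - 2 * (ℓ : ℤ)) w))
          else 0 := by
  simp only [tildeD, DFinsupp.lsum_single, LinearMap.sum_apply]
  rw [← Finset.sum_attach (Finset.range (ℓ + 1))
    (fun j => if h : j ≤ ℓ then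
            DFinsupp.single (β := fun m : ℕ => C (n - 1 - 2 * (m : ℤ))) (ℓ - j)
              (gcast R C (by omega) (φ j (n - 2 * (ℓ : ℤ)) w))
          else 0)]
  refine Finset.sum_congr rfl fun j _ => ?_
  rw [dif_pos (by have := Finset.mem_range.mp j.2; omega)]
  rfl

lemma D_single_apply (n : ℤ) (ℓ m : ℕ) (w : C (n - 2 * (ℓ : ℤ))) :
    (tildeD R C φ n (DFinsupp.single ℓ w)) m
      = if h : m ≤ ℓ then gcast R C (by omega) (φ (ℓ - m) (n - 2 * (ℓ : ℤ)) w)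
        else 0 := by
  rw [D_single φ]
  simp only [DFinsupp.finset_sum_apply]
  by_cases hm : m ≤ ℓ
  · rw [dif_pos hm]
    rw [Finset.sum_eq_single_of_mem (ℓ - m) (Finset.mem_range.mpr (by omega))]
    · rw [dif_pos (Nat.sub_le _ _)]
      rw [single_apply_self (R := R) (by omega), gcast_gcast]

    · intro j _ hj
      by_cases hjl : j ≤ ℓ
      · rw [dif_pos hjl]
        exact DFinsupp.single_eq_of_ne (by omega)
      · rw [dif_neg hjl]; rfl
  · rw [dif_neg hm]
    refine Finset.sum_eq_zero fun j hj => ?_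
    by_cases hjl : j ≤ ℓ
    · rw [dif_pos hjl]
      exact DFinsupp.single_eq_of_ne (by omega)
    · rw [dif_neg hjl]; rfl

lemma sd_apply (a k : ℤ) (h : a = k + 2) (v : Tilde C a) (m : ℕ) :
    (sd (R := R) (C := C) a k h v) m = gcast R C (by omega) (v (m + 1)) := by
  have key : (DFinsupp.lapply (R := R) m).comp (sd (R := R) (C := C) a k h)
      = (gcast R C (show a - 2 * ((m+1 : ℕ) : ℤ) = k - 2 * (m : ℤ) by push_cast; omega)).comp
          ((DFinsupp.lapply (R := R) (m + 1)) :
            Tilde C a →ₗ[R] C (a - 2 * ((m+1 : ℕ) : ℤ))) := by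
    apply DFinsupp.lhom_ext
    intro i b
    simp only [LinearMap.comp_apply, DFinsupp.lapply_apply]
    rw [sd_single]
    cases i with
    | zero =>
      rw [dif_pos rfl]
      rw [DFinsupp.single_eq_of_ne (by omega)]
      simp
    | succ i' =>
      rw [dif_neg (by omega)]
      by_cases hi : i' = m
      · subst hi
        rw [single_apply_self (R := R) (show i' + 1 - 1 = i' by omega),
          single_apply_self (R := R) rfl, gcast_gcast, gcast_gcast]
      · rw [DFinsupp.single_eq_of_ne (by omega), DFinsupp.single_eq_of_ne (by omega)]
        simp
  exact LinearMap.congr_fun key v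

lemma D_sd (a k : ℤ) (h : a = k + 2) :
    (tildeD R C φ k).comp (sd (R := R) (C := C) a k h)
      = (sd (R := R) (C := C) (a - 1) (k - 1) (by omega)).comp (tildeD R C φ a) := by
  apply DFinsupp.lhom_ext
  intro i b
  simp only [LinearMap.comp_apply]
  cases i with
  | zero =>
    rw [sd_single, dif_pos rfl, map_zero, D_single φ, Finset.sum_range_one,
      dif_pos (Nat.zero_le 0), sd_single, dif_pos (by omega)]
  | succ ℓ =>
    rw [sd_single, dif_neg (Nat.succ_ne_zero ℓ)]
    rw [single_congr (R := R) (show ℓ + 1 - 1 = ℓ by omega), gcast_gcast]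
    rw [D_single φ, D_single φ, map_sum]
    simp only [apply_dite (sd (R := R) (C := C) (a - 1) (k - 1) (by omega)), map_zero,
      sd_single]
    conv_rhs => rw [Finset.sum_range_succ]
    rw [dif_pos (le_refl (ℓ + 1)), dif_pos (show ℓ + 1 - (ℓ + 1) = 0 by omega), add_zero]
    refine Finset.sum_congr rfl fun j hj => ?_
    have hjl : j ≤ ℓ := by have := Finset.mem_range.mp hj; omega
    rw [dif_pos hjl, dif_pos (show j ≤ ℓ + 1 by omega),
      dif_neg (show ¬(ℓ + 1 - j = 0) by omega)]
    rw [single_congr (R := R) (show ℓ + 1 - j - 1 = ℓ - j by omega)]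
    rw [phi_gcast φ j (show a - 2 * ((ℓ + 1 : ℕ) : ℤ) = k - 2 * (ℓ : ℤ) by push_cast; omega)
      (by push_cast; omega)]
    simp only [gcast_gcast]

lemma D_su_apply (a k : ℤ) (h : k = a + 2) (v : Tilde C a) (m : ℕ) :
    (tildeD R C φ k (su (R := R) (C := C) a k h v)) (m + 1)
      = gcast R C (by push_cast; omega) ((tildeD R C φ a v) m) := by
  have key : (DFinsupp.lapply (R := R) (m + 1)).comp
        ((tildeD R C φ k).comp (su (R := R) (C := C) a k h))
      = (gcast R C (show a - 1 - 2 * ((m : ℕ) : ℤ) = k - 1 - 2 * ((m + 1 : ℕ) : ℤ) by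
          push_cast; omega)).comp
          ((DFinsupp.lapply (R := R) m).comp (tildeD R C φ a)) := by
    apply DFinsupp.lhom_ext
    intro ℓ b
    simp only [LinearMap.comp_apply, DFinsupp.lapply_apply]
    rw [su_single, D_single_apply φ, D_single_apply φ]
    by_cases hm : m ≤ ℓ
    · rw [dif_pos (show m + 1 ≤ ℓ + 1 by omega), dif_pos hm]
      rw [phi_gcast φ _ _ (by push_cast; omega), gcast_gcast, gcast_gcast]
      exact phi_congr φ (by omega) _ _ b
    · rw [dif_neg (show ¬(m + 1 ≤ ℓ + 1) by omega), dif_neg hm, map_zero]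
  exact LinearMap.congr_fun key v

lemma sum_phiphi (hφ : IsSOneStructure R C φ) (n m : ℤ) (k : ℕ)
    (hm : n + 2 * (k : ℤ) - 2 = m) (w : C n) :
    ∑ j ∈ Finset.range (k + 1),
        (if h : j ≤ k then
          gcast R C (by omega) (φ (k - j) (n + (2 * (j : ℤ) - 1)) (φ j n w))
        else 0) = (0 : C m) := by
  have H0 := DFunLike.congr_fun (hφ k n) w
  simp only [LinearMap.sum_apply, LinearMap.comp_apply, LinearMap.zero_apply] at H0
  have H : ∑ j ∈ Finset.range (k + 1),
      (if h : j ≤ k then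
        gcast R C (show n + (2 * ((k - j : ℕ) : ℤ) - 1) + (2 * (j : ℤ) - 1)
            = n + 2 * (k : ℤ) - 2 by omega)
          (φ j (n + (2 * ((k - j : ℕ) : ℤ) - 1)) (φ (k - j) n w))
      else 0) = (0 : C (n + 2 * (k : ℤ) - 2)) := by
    rw [← Finset.sum_attach (Finset.range (k + 1))
      (fun j => if h : j ≤ k then
        gcast R C (show n + (2 * ((k - j : ℕ) : ℤ) - 1) + (2 * (j : ℤ) - 1)
            = n + 2 * (k : ℤ) - 2 by omega)
          (φ j (n + (2 * ((k - j : ℕ) : ℤ) - 1)) (φ (k - j) n w))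
      else 0)]
    rw [← H0]
    refine Finset.sum_congr rfl fun j _ => ?_
    rw [dif_pos (show j.1 ≤ k by have := Finset.mem_range.mp j.2; omega)]
  calc ∑ j ∈ Finset.range (k + 1),
        (if h : j ≤ k then
          gcast R C (by omega) (φ (k - j) (n + (2 * (j : ℤ) - 1)) (φ j n w))
        else 0)
      = ∑ j ∈ Finset.range (k + 1),
        gcast R C hm ((if h : j ≤ k then
          gcast R C (show n + (2 * ((k - j : ℕ) : ℤ) - 1) + (2 * (j : ℤ) - 1)
              = n + 2 * (k : ℤ) - 2 by omega)
            (φ j (n + (2 * ((k - j : ℕ) : ℤ) - 1)) (φ (k - j) n w))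
        else 0)) := ?_
    _ = 0 := by rw [← map_sum, H, map_zero]
  rw [← Finset.sum_range_reflect]
  simp only [Nat.add_sub_cancel]
  refine Finset.sum_congr rfl fun j hj => ?_
  have hjk : j ≤ k := by have := Finset.mem_range.mp hj; omega
  rw [dif_pos (Nat.sub_le k j), dif_pos hjk, gcast_gcast]
  exact phi_congr φ (show k - (k + 1 - 1 - j) = j by omega) (by omega) (by omega) _

lemma DD_apply_zero (hφ : IsSOneStructure R C φ) (a : ℤ) (v : Tilde C a) :
    (tildeD R C φ (a - 1) (tildeD R C φ a v)) 0 = 0 := by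
  have key : (DFinsupp.lapply (R := R) 0).comp
      ((tildeD R C φ (a - 1)).comp (tildeD R C φ a)) = 0 := by
    apply DFinsupp.lhom_ext
    intro ℓ w
    simp only [LinearMap.comp_apply, DFinsupp.lapply_apply, LinearMap.zero_apply]
    rw [D_single φ, map_sum, DFinsupp.finset_sum_apply]
    have : ∀ j ∈ Finset.range (ℓ + 1),
        ((tildeD R C φ (a - 1)
          (if h : j ≤ ℓ then
            DFinsupp.single (β := fun m : ℕ => C (a - 1 - 2 * (m : ℤ))) (ℓ - j)
              (gcast R C (by omega) (φ j (a - 2 * (ℓ : ℤ)) w))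
          else 0)) 0)
        = (if h : j ≤ ℓ then
            gcast R C (by omega)
              (φ (ℓ - j) (a - 2 * (ℓ : ℤ) + (2 * (j : ℤ) - 1)) (φ j (a - 2 * (ℓ : ℤ)) w))
          else 0) := by
      intro j hj
      have hjl : j ≤ ℓ := by have := Finset.mem_range.mp hj; omega
      rw [dif_pos hjl, dif_pos hjl]
      rw [D_single_apply φ, dif_pos (Nat.zero_le _)]
      rw [phi_gcast φ _ _ (by omega)]
      simp only [gcast_gcast]
      exact phi_congr φ (by omega) _ _ _
    rw [Finset.sum_congr rfl this]
    exact sum_phiphi φ hφ (a - 2 * (ℓ : ℤ)) _ ℓ (by push_cast; omega) w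
  calc (tildeD R C φ (a - 1) (tildeD R C φ a v)) 0
      = ((DFinsupp.lapply (R := R) 0).comp
          ((tildeD R C φ (a - 1)).comp (tildeD R C φ a))) v := rfl
    _ = 0 := by rw [key]; rfl

end Helpers

/-- If `(C, φ)` is an `S¹`-complex whose equivariant homology vanishes
(every cycle of `(C̃, ∂̃)` is a boundary, in every degree), then the homology of `(C, φ_0)`
vanishes as well (every cycle of `C` is a boundary). -/

theorem sone_equivariant_vanishing_implies_vanishing (R : Type) [CommRing R] (C : ℤ → Type)
    [∀ n, AddCommGroup (C n)] [∀ n, Module R (C n)]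
    (φ : ∀ (i : ℕ) (n : ℤ), C n →ₗ[R] C (n + (2 * (i : ℤ) - 1)))
    (hφ : IsSOneStructure R C φ)
    (hvan : ∀ (n : ℤ) (x : Tilde C n), tildeD R C φ n x = 0 →
      ∃ y : Tilde C (n + 1),
        gcast R (fun m => Tilde C m) (show n + 1 - 1 = n by ring) (tildeD R C φ (n + 1) y)
          = x) :
    ∀ (n : ℤ) (x : C n), φ 0 n x = 0 →
      ∃ y : C (n + 1),
        gcast R C (show n + 1 + (2 * ((0 : ℕ) : ℤ) - 1) = n by push_cast; ring)
          (φ 0 (n + 1) y) = x := by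
  intro n x hx
  -- the cycle x as an element of the equivariant complex
  set xt : Tilde C n := DFinsupp.single (β := fun ℓ : ℕ => C (n - 2 * (ℓ : ℤ))) 0
    (gcast R C (by push_cast; ring) x) with hxt_def
  have hxt : tildeD R C φ n xt = 0 := by
    rw [hxt_def, D_single φ, Finset.sum_range_one, dif_pos (le_refl 0)]
    rw [phi_gcast φ _ _ (by push_cast; omega), hx, map_zero, map_zero,
      DFinsupp.single_zero]
  obtain ⟨y, hy⟩ := hvan n xt hxt
  have hDy0 : (tildeD R C φ (n + 1) y) 0 = gcast R C (by push_cast; omega) x := by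
    have h0 := congrArg (fun v : Tilde C n => v 0) hy
    rw [gT_apply, hxt_def, DFinsupp.single_eq_same] at h0
    rw [gcast_eq_symm] at h0
    rw [h0, gcast_gcast]
  have hDym : ∀ m : ℕ, (tildeD R C φ (n + 1) y) (m + 1) = 0 := by
    intro m
    have h0 := congrArg (fun v : Tilde C n => v (m + 1)) hy
    rw [gT_apply, hxt_def, DFinsupp.single_eq_of_ne (by omega)] at h0
    rw [gcast_eq_symm, map_zero] at h0
    exact h0
  -- the shifted class
  set yb : Tilde C (n - 1) := sd (R := R) (C := C) (n + 1) (n - 1) (by ring) y with hyb_def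
  have hyb : tildeD R C φ (n - 1) yb = 0 := by
    have hc := LinearMap.congr_fun (D_sd φ (n + 1) (n - 1) (by ring)) y
    simp only [LinearMap.comp_apply] at hc
    ext m
    rw [hyb_def, hc, sd_apply, hDym m, map_zero]
    rfl
  obtain ⟨z, hz⟩ := hvan (n - 1) yb hyb
  have hz' : ∀ m : ℕ, (tildeD R C φ (n - 1 + 1) z) m
      = gcast R C (by push_cast; omega) (y (m + 1)) := by
    intro m
    have h1 := congrArg (fun v : Tilde C (n - 1) => v m) hz
    rw [gT_apply, hyb_def, sd_apply] at h1
    rw [gcast_eq_symm] at h1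
    rw [h1, gcast_gcast]
  -- the correction term and the corrected primitive
  set u : Tilde C (n + 2) := su (R := R) (C := C) (n - 1 + 1) (n + 2) (by ring) z with hu_def
  set w : Tilde C (n + 1) := y - gcast R (fun m => Tilde C m) (show n + 2 - 1 = n + 1 by ring)
    (tildeD R C φ (n + 2) u) with hw_def
  have hwm : ∀ m : ℕ, w (m + 1) = 0 := by
    intro m
    rw [hw_def, DFinsupp.sub_apply, gT_apply, hu_def, D_su_apply φ, hz' m]
    rw [gcast_gcast, gcast_gcast, gcast_id, sub_self]
  have hws : w = DFinsupp.single (β := fun ℓ : ℕ => C (n + 1 - 2 * (ℓ : ℤ))) 0 (w 0) := by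
    ext m
    cases m with
    | zero => rw [DFinsupp.single_eq_same]
    | succ m => rw [DFinsupp.single_eq_of_ne (by omega), hwm m]
  have hDw0 : (tildeD R C φ (n + 1) w) 0 = gcast R C (by push_cast; omega) x := by
    rw [hw_def, map_sub, DFinsupp.sub_apply, hDy0]
    rw [D_gT φ (show n + 2 - 1 = n + 1 by ring) (by ring), gT_apply,
      DD_apply_zero φ hφ (n + 2), map_zero, sub_zero]
  refine ⟨gcast R C (show n + 1 - 2 * ((0 : ℕ) : ℤ) = n + 1 by push_cast; ring) (w 0), ?_⟩
  rw [phi_gcast φ _ _ (by push_cast; omega), gcast_gcast]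
  rw [hws, D_single_apply φ, dif_pos (le_refl 0)] at hDw0
  have h2 := congrArg (gcast R C
    (show n + 1 - 1 - 2 * ((0 : ℕ) : ℤ) = n by push_cast; omega)) hDw0
  rw [gcast_gcast, gcast_gcast, gcast_id] at h2
  rw [← h2]
end
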